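/- arXiv:1311.3599 — 6 statements merged into one kernel-verified Lean document; each statement's English description precedes it below -/
import Mathlib

section
/- For every n ≥ 1 and every unitary matrix U ∈ M_{2^n}(ℂ), there exist an integer r with r ≤ 2^{n−1}(2^n − 1) and matrices U_1, …, U_r ∈ M_{2^n}(ℂ), each of which is a controlled single-qubit gate on n qubits with k controls for some k ∈ {0, 1, …, n−1}, such that U = U_1 · U_2 ⋯ U_r. -/
/-!
Order the `2^n` basis states along the reflected Gray code `x₀, …, x_m` (`m = 2^n - 1`), so that
consecutive states differ in exactly one bit. A unitary acting only on two neighbours `a`, `b` is a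
gate on the bit where they differ, controlled by the other `n - 1` bits taking the values shared by
`a` and `b`.

Givens elimination along the path produces such gates. Rotations on the pairs
`(x_{m-1}, x_m), …, (x₀, x₁)` move all of column `x₀` into the entry at `x₀`, and the last
rotation can make that entry real and nonnegative; unitarity forces it to be `1`, so row `x₀` is
trivial too and what remains lives on `x₁, …, x_m`. This costs `m + (m - 1) + ⋯ + 2` rotations,
plus one gate for the final `2 × 2` block: `(m + 1).choose 2 = 2^(n-1) (2^n - 1)` in total.
-/

open Matrix

/-- The Kronecker product `V_n ⊗ ⋯ ⊗ V_1` of `n` two-by-two complex matrices,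
as a `2^n × 2^n` matrix; the factor `V i` acts on the `(i+1)`-st qubit
(the low-order bit of the index corresponds to `V 0`, i.e. to `V_1`). -/
noncomputable def kronPow (n : ℕ) (V : Fin n → Matrix (Fin 2) (Fin 2) ℂ) :
    Matrix (Fin (2 ^ n)) (Fin (2 ^ n)) ℂ :=
  Matrix.of fun x y =>
    ∏ i : Fin n, V i (finFunctionFinEquiv.symm x i) (finFunctionFinEquiv.symm y i)

/-- The diagonal matrix unit `diag(1,0)`. -/
def E00 : Matrix (Fin 2) (Fin 2) ℂ := !![1, 0; 0, 0]

/-- The diagonal matrix unit `diag(0,1)`. -/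
def E11 : Matrix (Fin 2) (Fin 2) ℂ := !![0, 0; 0, 1]

/-- A controlled single-qubit gate on `n` qubits with `k` controls:
a matrix of the form `I + V_n ⊗ ⋯ ⊗ V_1` where exactly one factor equals
`W - I` for a unitary `W ∈ M_2(ℂ)`, exactly `k` of the remaining factors
belong to `{E00, E11}`, and all other factors equal `I_2`. -/
noncomputable def IsControlledGate (n k : ℕ)
    (U : Matrix (Fin (2 ^ n)) (Fin (2 ^ n)) ℂ) : Prop :=
  ∃ (V : Fin n → Matrix (Fin 2) (Fin 2) ℂ) (i : Fin n)
    (W : Matrix (Fin 2) (Fin 2) ℂ),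
      W ∈ Matrix.unitaryGroup (Fin 2) ℂ ∧
      V i = W - 1 ∧
      (∀ j, j ≠ i → V j = E00 ∨ V j = E11 ∨ V j = 1) ∧
      {j : Fin n | j ≠ i ∧ (V j = E00 ∨ V j = E11)}.ncard = k ∧
      U = 1 + kronPow n V

def IsProdOfAtMost {M : Type*} [Monoid M] (S : Set M) (m : ℕ) (x : M) : Prop :=
  ∃ L : List M, L.length ≤ m ∧ (∀ A ∈ L, A ∈ S) ∧ L.prod = x

namespace IsProdOfAtMost

variable {M : Type*} [Monoid M] {S : Set M} {m k : ℕ} {x y : M}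

theorem of_mem (hx : x ∈ S) : IsProdOfAtMost S 1 x :=
  ⟨[x], le_rfl, by simpa using hx, by simp⟩

theorem mul (hx : IsProdOfAtMost S m x) (hy : IsProdOfAtMost S k y) :
    IsProdOfAtMost S (m + k) (x * y) := by
  obtain ⟨L, hL, hLS, rfl⟩ := hx
  obtain ⟨L', hL', hL'S, rfl⟩ := hy
  refine ⟨L ++ L', by simp; omega, ?_, List.prod_append⟩
  simp only [List.mem_append]
  rintro A (hA | hA)
  exacts [hLS A hA, hL'S A hA]

theorem mono {T : Set M} (hx : IsProdOfAtMost S m x) (hST : S ⊆ T) (hmk : m ≤ k) :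
    IsProdOfAtMost T k x := by
  obtain ⟨L, hL, hLS, rfl⟩ := hx
  exact ⟨L, hL.trans hmk, fun A hA => hST (hLS A hA), rfl⟩

theorem mem_submonoid {N : Submonoid M} (hx : IsProdOfAtMost S m x) (hSN : S ⊆ N) : x ∈ N := by
  obtain ⟨L, -, hLS, rfl⟩ := hx
  exact N.list_prod_mem fun A hA => hSN (hLS A hA)

theorem star [StarMul M] (hS : ∀ A ∈ S, star A ∈ S) (hx : IsProdOfAtMost S m x) :
    IsProdOfAtMost S m (star x) := by
  obtain ⟨L, hL, hLS, rfl⟩ := hx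
  refine mono ?_ le_rfl hL
  clear hL
  induction L with
  | nil => exact ⟨[], le_rfl, by simp, by simp⟩
  | cons A L ih =>
    rw [List.prod_cons, star_mul, List.length_cons]
    exact (ih fun B hB => hLS B (List.mem_cons_of_mem A hB)).mul
      (of_mem (hS A (hLS A List.mem_cons_self)))

end IsProdOfAtMost

section IdOutside

variable {ι R : Type*} [Fintype ι] [DecidableEq ι] [Semiring R]

def idOutside (s : Set ι) : Submonoid (Matrix ι ι R) where
  carrier := {U | ∀ x y, (x ∉ s ∨ y ∉ s) → U x y = (1 : Matrix ι ι R) x y}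
  one_mem' _ _ _ := rfl
  mul_mem' {U V} hU hV x y := by
    rintro (hx | hy)
    · have hrow : U x = (1 : Matrix ι ι R) x := funext fun k => hU x k (Or.inl hx)
      rw [mul_apply', hrow, ← mul_apply', Matrix.one_mul, hV x y (Or.inl hx)]
    · have hcol : (fun k => V k y) = fun k => (1 : Matrix ι ι R) k y :=
        funext fun k => hV k y (Or.inr hy)
      rw [mul_apply', hcol, ← mul_apply', Matrix.mul_one, hU x y (Or.inr hy)]

variable {s t : Set ι} {U : Matrix ι ι R}

theorem idOutside_univ : idOutside (R := R) (Set.univ : Set ι) = ⊤ :=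
  eq_top_iff.mpr fun _ _ x y hxy => by simp at hxy

theorem idOutside_mono (hst : s ⊆ t) : idOutside (R := R) s ≤ idOutside t :=
  fun _ hU x y hxy => hU x y (hxy.imp (fun hx h => hx (hst h)) (fun hy h => hy (hst h)))

theorem mem_idOutside_of_mem_insert {a : ι} (hU : U ∈ idOutside (insert a s))
    (hrow : ∀ y, U a y = (1 : Matrix ι ι R) a y)
    (hcol : ∀ x, U x a = (1 : Matrix ι ι R) x a) :
    U ∈ idOutside s := by
  rintro x y (hx | hy)
  · by_cases hxa : x = a
    · rw [hxa, hrow]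
    · exact hU x y (Or.inl fun h => hx (h.resolve_left hxa))
  · by_cases hya : y = a
    · rw [hya, hcol]
    · exact hU x y (Or.inr fun h => hy (h.resolve_left hya))

end IdOutside

section SubmatrixOne

variable {ι κ R : Type*} [Fintype ι] [DecidableEq ι] [NonAssocSemiring R] {e : κ → ι}

theorem submatrix_one_mul_submatrix_one [DecidableEq κ] (he : Function.Injective e) :
    (1 : Matrix ι ι R).submatrix e id * (1 : Matrix ι ι R).submatrix id e = 1 := by
  rw [← submatrix_mul _ _ _ _ _ Function.bijective_id, Matrix.one_mul, submatrix_one e he]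

theorem submatrix_eq_submatrix_one_mul_mul (X : Matrix ι ι R) :
    X.submatrix e e =
      (1 : Matrix ι ι R).submatrix e id * X * (1 : Matrix ι ι R).submatrix id e := by
  ext k l
  simp [mul_apply, one_apply]

end SubmatrixOne

section BlockExtend

variable {ι κ R : Type*} [DecidableEq ι] [DecidableEq κ] [Fintype κ] [Ring R]

/-- For injective `e`, this acts as `M` on the coordinates `e k` and as the identity elsewhere. -/
def blockExtend (e : κ → ι) (M : Matrix κ κ R) : Matrix ι ι R :=
  1 + (1 : Matrix ι ι R).submatrix id e * (M - 1) * (1 : Matrix ι ι R).submatrix e id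

variable {e : κ → ι}

theorem blockExtend_one : blockExtend e (1 : Matrix κ κ R) = 1 := by
  simp [blockExtend]

theorem blockExtend_apply_of_notMem_left {x : ι} (hx : x ∉ Set.range e) (M : Matrix κ κ R)
    (y : ι) : blockExtend e M x y = (1 : Matrix ι ι R) x y := by
  have hx' : ∀ k, x ≠ e k := fun k h => hx ⟨k, h.symm⟩
  simp [blockExtend, mul_apply, one_apply, hx']

theorem blockExtend_apply_of_notMem_right {y : ι} (hy : y ∉ Set.range e) (M : Matrix κ κ R)
    (x : ι) : blockExtend e M x y = (1 : Matrix ι ι R) x y := by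
  have hy' : ∀ k, e k ≠ y := fun k h => hy ⟨k, h⟩
  simp [blockExtend, mul_apply, one_apply, hy']

theorem blockExtend_comp_equiv (σ : κ ≃ κ) (M : Matrix κ κ R) :
    blockExtend (e ∘ σ) (M.submatrix σ σ) = blockExtend e M := by
  have hM : M.submatrix σ σ - 1 = (M - 1).submatrix σ σ := by
    ext i j; simp [one_apply]
  rw [blockExtend, blockExtend, hM]
  change 1 + ((1 : Matrix ι ι R).submatrix id e).submatrix id σ * (M - 1).submatrix σ σ *
    ((1 : Matrix ι ι R).submatrix e id).submatrix σ id = _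
  rw [submatrix_mul_equiv, submatrix_mul_equiv, submatrix_id_id]

theorem star_blockExtend [StarRing R] (M : Matrix κ κ R) :
    star (blockExtend e M) = blockExtend e (star M) := by
  simp only [blockExtend, star_add, star_eq_conjTranspose, conjTranspose_mul,
    conjTranspose_sub, conjTranspose_one, conjTranspose_submatrix, Matrix.mul_assoc]

variable [Fintype ι]

theorem blockExtend_submatrix (he : Function.Injective e) (M : Matrix κ κ R) :
    (blockExtend e M).submatrix e e = M := by
  have hQP := submatrix_one_mul_submatrix_one (R := R) he
  have hQPAQP : ∀ A : Matrix κ κ R, (1 : Matrix ι ι R).submatrix e id *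
      ((1 : Matrix ι ι R).submatrix id e * A * (1 : Matrix ι ι R).submatrix e id) *
      (1 : Matrix ι ι R).submatrix id e = A := by
    intro A
    simp only [← Matrix.mul_assoc, hQP, Matrix.one_mul]
    rw [Matrix.mul_assoc, hQP, Matrix.mul_one]
  rw [submatrix_eq_submatrix_one_mul_mul, blockExtend, Matrix.mul_add, Matrix.add_mul,
    Matrix.mul_one, hQP, hQPAQP, add_sub_cancel]

theorem blockExtend_apply_apply (he : Function.Injective e) (M : Matrix κ κ R) (k l : κ) :
    blockExtend e M (e k) (e l) = M k l :=
  congrFun (congrFun (blockExtend_submatrix he M) k) l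

theorem blockExtend_injective (he : Function.Injective e) :
    Function.Injective (blockExtend e : Matrix κ κ R → Matrix ι ι R) := fun M N h => by
  rw [← blockExtend_submatrix he M, h, blockExtend_submatrix he N]

theorem blockExtend_mul (he : Function.Injective e) (M N : Matrix κ κ R) :
    blockExtend e M * blockExtend e N = blockExtend e (M * N) := by
  set P := (1 : Matrix ι ι R).submatrix id e
  set Q := (1 : Matrix ι ι R).submatrix e id
  have hMN : M * N - 1 = (M - 1) + (N - 1) + (M - 1) * (N - 1) := by noncomm_ring
  have hQP : P * (M - 1) * Q * (P * (N - 1) * Q) = P * ((M - 1) * (N - 1)) * Q := by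
    simp only [Matrix.mul_assoc]
    rw [← Matrix.mul_assoc Q, submatrix_one_mul_submatrix_one he, Matrix.one_mul]
  calc (1 + P * (M - 1) * Q) * (1 + P * (N - 1) * Q)
      = 1 + P * (M - 1) * Q + P * (N - 1) * Q + P * (M - 1) * Q * (P * (N - 1) * Q) := by
        noncomm_ring
    _ = 1 + P * (M * N - 1) * Q := by
        rw [hQP, hMN, Matrix.mul_add, Matrix.mul_add, Matrix.add_mul, Matrix.add_mul]
        abel

theorem eq_blockExtend_of_mem_idOutside (he : Function.Injective e) {U : Matrix ι ι R}
    (hU : U ∈ idOutside (Set.range e)) : U = blockExtend e (U.submatrix e e) := by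
  ext x y
  by_cases hx : x ∈ Set.range e
  · by_cases hy : y ∈ Set.range e
    · obtain ⟨k, rfl⟩ := hx
      obtain ⟨l, rfl⟩ := hy
      rw [blockExtend_apply_apply he, submatrix_apply]
    · rw [blockExtend_apply_of_notMem_right hy, hU x y (Or.inr hy)]
  · rw [blockExtend_apply_of_notMem_left hx, hU x y (Or.inl hx)]

theorem blockExtend_mulVec_comp (he : Function.Injective e) (M : Matrix κ κ R) (v : ι → R) :
    (blockExtend e M *ᵥ v) ∘ e = M *ᵥ (v ∘ e) := by
  have hQ : ∀ w : ι → R, (1 : Matrix ι ι R).submatrix e id *ᵥ w = w ∘ e := fun w => by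
    ext k; simp [mulVec, dotProduct, one_apply]
  have hQB : (1 : Matrix ι ι R).submatrix e id * blockExtend e M =
      M * (1 : Matrix ι ι R).submatrix e id := by
    rw [blockExtend, Matrix.mul_add, Matrix.mul_one, ← Matrix.mul_assoc, ← Matrix.mul_assoc,
      submatrix_one_mul_submatrix_one he, Matrix.one_mul, Matrix.sub_mul, Matrix.one_mul,
      add_sub_cancel]
  rw [← hQ, ← hQ, mulVec_mulVec, hQB, ← mulVec_mulVec]

theorem blockExtend_mulVec_of_notMem {x : ι} (hx : x ∉ Set.range e) (M : Matrix κ κ R)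
    (v : ι → R) : (blockExtend e M *ᵥ v) x = v x := by
  have hrow : blockExtend e M x = (1 : Matrix ι ι R) x :=
    funext (blockExtend_apply_of_notMem_left hx M)
  calc (blockExtend e M *ᵥ v) x = ((1 : Matrix ι ι R) *ᵥ v) x := by simp only [mulVec, hrow]
    _ = v x := by rw [one_mulVec]

end BlockExtend

section Unitary

variable {ι κ R : Type*} [Fintype ι] [Fintype κ] [DecidableEq ι] [DecidableEq κ] [CommRing R]
  [StarRing R] {e : κ → ι}

theorem blockExtend_mem_unitaryGroup (he : Function.Injective e) {M : Matrix κ κ R}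
    (hM : M ∈ unitaryGroup κ R) : blockExtend e M ∈ unitaryGroup ι R := by
  rw [mem_unitaryGroup_iff, star_blockExtend, blockExtend_mul he, mem_unitaryGroup_iff.mp hM,
    blockExtend_one]

theorem submatrix_mem_unitaryGroup_of_mem_idOutside (he : Function.Injective e)
    {U : Matrix ι ι R} (hU : U ∈ unitaryGroup ι R) (hUe : U ∈ idOutside (Set.range e)) :
    U.submatrix e e ∈ unitaryGroup κ R := by
  have h := eq_blockExtend_of_mem_idOutside he hUe
  rw [mem_unitaryGroup_iff] at hU ⊢
  apply blockExtend_injective he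
  rw [← blockExtend_mul he, ← star_blockExtend, ← h, hU, blockExtend_one]

theorem submatrix_equiv_mem_unitaryGroup {W : Matrix κ κ R} (hW : W ∈ unitaryGroup κ R)
    (σ : κ ≃ κ) : W.submatrix σ σ ∈ unitaryGroup κ R := by
  rw [mem_unitaryGroup_iff, star_eq_conjTranspose, conjTranspose_submatrix, submatrix_mul_equiv,
    ← star_eq_conjTranspose, mem_unitaryGroup_iff.mp hW, submatrix_one_equiv]

end Unitary

open ComplexConjugate in
theorem exists_unitary_mulVec_eq (p q : ℂ) :
    ∃ W ∈ unitaryGroup (Fin 2) ℂ, ∃ ρ : ℝ, 0 ≤ ρ ∧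
      W *ᵥ ![p, q] = ![(ρ : ℂ), 0] := by
  by_cases h : p = 0 ∧ q = 0
  · exact ⟨1, one_mem _, 0, le_rfl, by simp [h.1, h.2]⟩
  have hpos : 0 < Complex.normSq p + Complex.normSq q := by
    rcases not_and_or.mp h with h | h
    · linarith [Complex.normSq_pos.mpr h, Complex.normSq_nonneg q]
    · linarith [Complex.normSq_pos.mpr h, Complex.normSq_nonneg p]
  set ρ := √(Complex.normSq p + Complex.normSq q)
  have hρ : (ρ : ℂ) ≠ 0 := by exact_mod_cast (Real.sqrt_pos.mpr hpos).ne'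
  have hρρ : conj p * p + conj q * q = (ρ : ℂ) ^ 2 := by
    rw [← Complex.ofReal_pow, Real.sq_sqrt hpos.le, mul_comm (conj p), mul_comm (conj q),
      Complex.mul_conj, Complex.mul_conj]
    push_cast; ring
  refine ⟨(ρ : ℂ)⁻¹ • !![conj p, conj q; -q, p], ?_, ρ, Real.sqrt_nonneg _, ?_⟩
  · rw [mem_unitaryGroup_iff]
    ext i j
    fin_cases i <;> fin_cases j <;> simp [Matrix.mul_apply, Fin.sum_univ_two] <;> field_simp <;>
      first | ring1 | linear_combination hρρ
  · ext i
    fin_cases i <;> simp [Matrix.mulVec, dotProduct, Fin.sum_univ_two] <;> field_simp <;>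
      first | ring1 | linear_combination hρρ

theorem row_col_eq_one_of_col_eq_single {ι : Type*} [Fintype ι] [DecidableEq ι]
    {U : Matrix ι ι ℂ} (hU : U ∈ unitaryGroup ι ℂ) {a : ι} {ρ : ℝ}
    (hρ : 0 ≤ ρ) (hcol : ∀ x, U x a = (Pi.single a (ρ : ℂ) : ι → ℂ) x) :
    (∀ y, U a y = (1 : Matrix ι ι ℂ) a y) ∧ ∀ x, U x a = (1 : Matrix ι ι ℂ) x a := by
  have hrow : ∀ y, (ρ : ℂ) * U a y = (1 : Matrix ι ι ℂ) a y := fun y => by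
    rw [← mem_unitaryGroup_iff'.mp hU, Matrix.mul_apply, Fintype.sum_eq_single a]
    · simp [hcol]
    · intro x hx; simp [hcol, hx]
  have hρ1 : ρ = 1 := by
    have h := hrow a
    rw [hcol, Pi.single_eq_same, Matrix.one_apply_eq, ← Complex.ofReal_mul] at h
    nlinarith [Complex.ofReal_eq_one.mp h]
  refine ⟨fun y => by simpa [hρ1] using hrow y, fun x => ?_⟩
  rw [hcol, hρ1, Complex.ofReal_one, Pi.single_apply, Matrix.one_apply]

section Graph

variable {ι : Type*} [DecidableEq ι]

def edgeTwoLevels (G : SimpleGraph ι) (s : Set ι) : Set (Matrix ι ι ℂ) :=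
  {A | ∃ a ∈ s, ∃ b ∈ s, G.Adj a b ∧
    ∃ W ∈ unitaryGroup (Fin 2) ℂ, A = blockExtend ![a, b] W}

variable {G : SimpleGraph ι} {s t : Set ι}

theorem edgeTwoLevels_mono (hst : s ⊆ t) : edgeTwoLevels G s ⊆ edgeTwoLevels G t := by
  rintro A ⟨a, ha, b, hb, hab, W, hW, rfl⟩
  exact ⟨a, hst ha, b, hst hb, hab, W, hW, rfl⟩

theorem star_mem_edgeTwoLevels {A : Matrix ι ι ℂ} (hA : A ∈ edgeTwoLevels G s) :
    star A ∈ edgeTwoLevels G s := by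
  obtain ⟨a, ha, b, hb, hab, W, hW, rfl⟩ := hA
  exact ⟨a, ha, b, hb, hab, star W, Unitary.star_mem hW, star_blockExtend W⟩

variable [Fintype ι]

theorem edgeTwoLevels_subset_unitaryGroup : edgeTwoLevels G s ⊆ unitaryGroup ι ℂ := by
  rintro A ⟨a, -, b, -, hab, W, hW, rfl⟩
  exact blockExtend_mem_unitaryGroup (injective_pair_iff_ne.mpr hab.ne) hW

theorem edgeTwoLevels_subset_idOutside :
    edgeTwoLevels G s ⊆ (idOutside s : Submonoid (Matrix ι ι ℂ)) := by
  rintro A ⟨a, ha, b, hb, -, W, -, rfl⟩ x y hxy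
  have hrange : Set.range ![a, b] ⊆ s := by
    rw [Matrix.range_cons_cons_empty]
    exact Set.insert_subset ha (Set.singleton_subset_iff.mpr hb)
  rcases hxy with hx | hy
  · exact blockExtend_apply_of_notMem_left (fun h => hx (hrange h)) W y
  · exact blockExtend_apply_of_notMem_right (fun h => hy (hrange h)) W x

theorem exists_blockExtend_mulVec_eq_update {a b : ι} (hab : a ≠ b) (v : ι → ℂ) :
    ∃ W ∈ unitaryGroup (Fin 2) ℂ, ∃ ρ : ℝ, 0 ≤ ρ ∧
      blockExtend ![a, b] W *ᵥ v = Function.update (Function.update v a ρ) b 0 := by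
  obtain ⟨W, hW, ρ, hρ, hWv⟩ := exists_unitary_mulVec_eq (v a) (v b)
  have he := injective_pair_iff_ne.mpr hab
  have hcomp := blockExtend_mulVec_comp he W v
  have hva : v ∘ ![a, b] = ![v a, v b] := by ext k; fin_cases k <;> rfl
  rw [hva, hWv] at hcomp
  refine ⟨W, hW, ρ, hρ, funext fun x => ?_⟩
  by_cases hxb : x = b
  · subst hxb; simpa using congrFun hcomp 1
  by_cases hxa : x = a
  · subst hxa; simpa [hab] using congrFun hcomp 0
  rw [Function.update_of_ne hxb, Function.update_of_ne hxa]
  exact blockExtend_mulVec_of_notMem (by simp [hxa, hxb]) W v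

end Graph

section Path

variable {ι : Type*} [Fintype ι] [DecidableEq ι] {G : SimpleGraph ι} {p : ℕ → ι}

theorem exists_isProdOfAtMost_mulVec_eq_single {m : ℕ} (hm : 1 ≤ m)
    (hp : ∀ i < m, G.Adj (p i) (p (i + 1))) (v : ι → ℂ)
    (hv : ∀ x ∉ p '' Set.Iic m, v x = 0) :
    ∃ R, IsProdOfAtMost (edgeTwoLevels G (p '' Set.Iic m)) m R ∧
      ∃ ρ : ℝ, 0 ≤ ρ ∧ R *ᵥ v = Pi.single (p 0) (ρ : ℂ) := by
  have hmem : ∀ {i k}, i ≤ k → p i ∈ p '' Set.Iic k := fun h => Set.mem_image_of_mem p h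
  induction m, hm using Nat.le_induction generalizing v with
  | base =>
    obtain ⟨W, hW, ρ, hρ, hWv⟩ := exists_blockExtend_mulVec_eq_update (hp 0 one_pos).ne v
    refine ⟨_, .of_mem ⟨p 0, hmem zero_le_one, p 1, hmem le_rfl, hp 0 one_pos, W, hW, rfl⟩,
      ρ, hρ, funext fun x => ?_⟩
    rw [hWv]
    by_cases hx1 : x = p 1
    · simp [hx1, (hp 0 one_pos).ne']
    by_cases hx0 : x = p 0
    · simp [hx0, (hp 0 one_pos).ne]
    rw [Function.update_of_ne hx1, Function.update_of_ne hx0, Pi.single_eq_of_ne hx0]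
    refine hv x fun ⟨i, (hi : i ≤ 1), hix⟩ => ?_
    interval_cases i
    exacts [hx0 hix.symm, hx1 hix.symm]
  | succ m hm ih =>
    have hadj := hp m (Nat.lt_succ_self m)
    obtain ⟨W, hW, ρ, -, hWv⟩ := exists_blockExtend_mulVec_eq_update hadj.ne v
    have hv' : ∀ x ∉ p '' Set.Iic m, (blockExtend ![p m, p (m + 1)] W *ᵥ v) x = 0 := by
      intro x hx
      have hxm : x ≠ p m := fun h => hx (h ▸ hmem le_rfl)
      rw [hWv]
      by_cases hxm1 : x = p (m + 1)
      · simp [hxm1]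
      rw [Function.update_of_ne hxm1, Function.update_of_ne hxm]
      refine hv x fun ⟨i, hi, hix⟩ => ?_
      rcases (Set.mem_Iic.mp hi).lt_or_eq with hi | rfl
      · exact hx ⟨i, Nat.lt_succ_iff.mp hi, hix⟩
      · exact hxm1 hix.symm
    obtain ⟨R, hR, ρ', hρ', hRv⟩ :=
      ih (fun i hi => hp i (hi.trans (Nat.lt_succ_self m))) _ hv'
    have hsub : p '' Set.Iic m ⊆ p '' Set.Iic (m + 1) :=
      Set.image_mono (Set.Iic_subset_Iic.mpr (Nat.le_succ m))
    refine ⟨R * blockExtend ![p m, p (m + 1)] W,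
      (hR.mono (edgeTwoLevels_mono hsub) le_rfl).mul
        (.of_mem ⟨p m, hmem (Nat.le_succ m), p (m + 1), hmem le_rfl, hadj, W, hW, rfl⟩),
      ρ', hρ', ?_⟩
    rw [← Matrix.mulVec_mulVec, hRv]

theorem isProdOfAtMost_edgeTwoLevels {m : ℕ} (hm : 1 ≤ m)
    (hp : ∀ i < m, G.Adj (p i) (p (i + 1)))
    {U : Matrix ι ι ℂ} (hU : U ∈ unitaryGroup ι ℂ)
    (hUp : U ∈ idOutside (p '' Set.Iic m)) :
    IsProdOfAtMost (edgeTwoLevels G Set.univ) ((m + 1).choose 2) U := by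
  induction m, hm using Nat.le_induction generalizing p U with
  | base =>
    have he := injective_pair_iff_ne.mpr (hp 0 one_pos).ne
    have hrange : p '' Set.Iic 1 ⊆ Set.range ![p 0, p 1] := by
      rintro _ ⟨i, (hi : i ≤ 1), rfl⟩
      interval_cases i <;> simp
    have hUe := eq_blockExtend_of_mem_idOutside he (idOutside_mono hrange hUp)
    refine .of_mem ⟨p 0, trivial, p 1, trivial, hp 0 one_pos, _,
      submatrix_mem_unitaryGroup_of_mem_idOutside he hU (idOutside_mono hrange hUp), hUe⟩
  | succ m hm ih =>
    have h0 : p 0 ∈ p '' Set.Iic (m + 1) := Set.mem_image_of_mem p (Nat.zero_le _)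
    obtain ⟨R, hR, ρ, hρ, hRv⟩ := exists_isProdOfAtMost_mulVec_eq_single (by omega) hp
      (fun x => U x (p 0)) fun x hx => by
        rw [hUp x (p 0) (Or.inl hx), one_apply_ne fun h : x = p 0 => hx (h ▸ h0)]
    have hRunit : R ∈ unitaryGroup ι ℂ := hR.mem_submonoid edgeTwoLevels_subset_unitaryGroup
    have hRid : R ∈ idOutside (p '' Set.Iic (m + 1)) :=
      hR.mem_submonoid edgeTwoLevels_subset_idOutside
    obtain ⟨hrow, hcol⟩ :=
      row_col_eq_one_of_col_eq_single (mul_mem hRunit hU) hρ (congrFun hRv)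
    have hsub : p '' Set.Iic (m + 1) ⊆ insert (p 0) ((fun i => p (i + 1)) '' Set.Iic m) := by
      rintro _ ⟨_ | i, hi, rfl⟩
      · exact Set.mem_insert _ _
      · exact Set.mem_insert_of_mem _ ⟨i, Nat.succ_le_succ_iff.mp hi, rfl⟩
    have hRU := ih (fun i hi => hp (i + 1) (by omega)) (mul_mem hRunit hU)
      (mem_idOutside_of_mem_insert (idOutside_mono hsub (mul_mem hRid hUp)) hrow hcol)
    have hstarR := (hR.star fun _ => star_mem_edgeTwoLevels).mono
      (edgeTwoLevels_mono (Set.subset_univ _)) le_rfl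
    rw [← one_mul U, ← mem_unitaryGroup_iff'.mp hRunit, mul_assoc, Nat.choose_succ_succ,
      Nat.choose_one_right]
    exact hstarR.mul hRU

end Path

theorem hammingDist_cons {α : Type*} [DecidableEq α] {n : ℕ} (a b : α) (f g : Fin n → α) :
    hammingDist (Fin.cons a f : Fin (n + 1) → α) (Fin.cons b g) =
      (if a = b then 0 else 1) + hammingDist f g := by
  simp only [hammingDist, Finset.card_filter, Fin.sum_univ_succ, Fin.cons_zero, Fin.cons_succ]
  split_ifs <;> simp_all

def grayCode : (n : ℕ) → ℕ → Fin n → Fin 2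
  | 0, _ => Fin.elim0
  | n + 1, i =>
    if i < 2 ^ n then Fin.cons 0 (grayCode n i) else Fin.cons 1 (grayCode n (2 ^ (n + 1) - 1 - i))

theorem hammingDist_grayCode_succ {n i : ℕ} (hi : i + 1 < 2 ^ n) :
    hammingDist (grayCode n i) (grayCode n (i + 1)) = 1 := by
  induction n generalizing i with
  | zero => simp at hi
  | succ n ih =>
    have h2 : 2 ^ (n + 1) = 2 * 2 ^ n := pow_succ' 2 n
    simp only [grayCode]
    by_cases hlo : i + 1 < 2 ^ n
    · rw [if_pos (by omega), if_pos hlo, hammingDist_cons, if_pos rfl, ih hlo, zero_add]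
    by_cases hmid : i + 1 = 2 ^ n
    · rw [if_pos (by omega), if_neg hlo, hammingDist_cons,
        show 2 ^ (n + 1) - 1 - (i + 1) = i by omega, hammingDist_self]
      rfl
    · rw [if_neg (by omega), if_neg hlo, hammingDist_cons, if_pos rfl, zero_add, hammingDist_comm,
        show 2 ^ (n + 1) - 1 - i = 2 ^ (n + 1) - 1 - (i + 1) + 1 by omega]
      exact ih (by omega)

theorem exists_grayCode_eq (n : ℕ) (f : Fin n → Fin 2) : ∃ i < 2 ^ n, grayCode n i = f := by
  induction n with
  | zero => exact ⟨0, by norm_num, funext fun x => x.elim0⟩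
  | succ n ih =>
    have h2 : 2 ^ (n + 1) = 2 * 2 ^ n := pow_succ' 2 n
    obtain ⟨j, hj, hjf⟩ := ih (Fin.tail f)
    rw [← Fin.cons_self_tail f, ← hjf]
    obtain h0 | h1 : f 0 = 0 ∨ f 0 = 1 := by omega
    · exact ⟨j, by omega, by rw [grayCode, if_pos hj, h0]⟩
    · refine ⟨2 ^ (n + 1) - 1 - j, by omega, ?_⟩
      rw [grayCode, if_neg (by omega), h1,
        show 2 ^ (n + 1) - 1 - (2 ^ (n + 1) - 1 - j) = j by omega]

theorem exists_ne_forall_eq_of_hammingDist_eq_one {ι : Type*} [Fintype ι] {β : ι → Type*}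
    [∀ i, DecidableEq (β i)] {f g : ∀ i, β i} (h : hammingDist f g = 1) :
    ∃ i, f i ≠ g i ∧ ∀ j ≠ i, f j = g j := by
  obtain ⟨i, hi⟩ := Finset.card_eq_one.mp h
  have hmem : ∀ j, f j ≠ g j ↔ j = i := fun j => by simpa using Finset.ext_iff.mp hi j
  exact ⟨i, (hmem i).mpr rfl, fun j hj => not_not.mp fun h => hj ((hmem j).mp h)⟩

def qubitGraph (n : ℕ) : SimpleGraph (Fin (2 ^ n)) where
  Adj x y := hammingDist (finFunctionFinEquiv.symm x) (finFunctionFinEquiv.symm y) = 1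
  symm := ⟨fun _ _ h => (hammingDist_comm _ _).trans h⟩
  loopless := ⟨fun _ h => by simp at h⟩

def grayPath (n i : ℕ) : Fin (2 ^ n) := finFunctionFinEquiv (grayCode n i)

theorem qubitGraph_adj_grayPath {n i : ℕ} (hi : i < 2 ^ n - 1) :
    (qubitGraph n).Adj (grayPath n i) (grayPath n (i + 1)) := by
  simp only [qubitGraph, grayPath, Equiv.symm_apply_apply]
  exact hammingDist_grayCode_succ (n := n) (i := i) (by omega)

theorem grayPath_image_Iic (n : ℕ) : grayPath n '' Set.Iic (2 ^ n - 1) = Set.univ := by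
  refine Set.eq_univ_of_forall fun x => ?_
  obtain ⟨i, hi, hix⟩ := exists_grayCode_eq n (finFunctionFinEquiv.symm x)
  exact ⟨i, Set.mem_Iic.mpr (by omega), by rw [grayPath, hix, Equiv.apply_symm_apply]⟩

def bitProj (c : Fin 2) : Matrix (Fin 2) (Fin 2) ℂ := if c = 0 then E00 else E11

theorem bitProj_apply (c u w : Fin 2) : bitProj c u w = if u = c ∧ w = c then 1 else 0 := by
  fin_cases c <;> fin_cases u <;> fin_cases w <;> simp [bitProj, E00, E11]

section ControlledGate

variable {n : ℕ} (β : Fin n → Fin 2) (i : Fin n)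

def bitPair (c : Fin 2) : Fin (2 ^ n) := finFunctionFinEquiv (Function.update β i c)

theorem bitPair_injective : Function.Injective (bitPair β i) := fun c d h => by
  simpa using congrFun (finFunctionFinEquiv.injective h) i

theorem kronPow_update_bitProj_apply_eq_zero (A : Matrix (Fin 2) (Fin 2) ℂ)
    {x y : Fin (2 ^ n)} {j : Fin n} (hji : j ≠ i)
    (hj : finFunctionFinEquiv.symm x j ≠ β j ∨ finFunctionFinEquiv.symm y j ≠ β j) :
    kronPow n (Function.update (fun j => bitProj (β j)) i A) x y = 0 := by
  refine Finset.prod_eq_zero (Finset.mem_univ j) ?_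
  rw [Function.update_of_ne hji, bitProj_apply, if_neg (by tauto)]

theorem exists_ne_of_notMem_range_bitPair {x : Fin (2 ^ n)} (hx : x ∉ Set.range (bitPair β i)) :
    ∃ j ≠ i, finFunctionFinEquiv.symm x j ≠ β j := by
  by_contra! h
  refine hx ⟨finFunctionFinEquiv.symm x i, finFunctionFinEquiv.symm.injective ?_⟩
  ext j
  by_cases hji : j = i
  · subst hji; simp [bitPair]
  · simp [bitPair, hji, h j hji]

theorem blockExtend_bitPair_eq_one_add_kronPow (M : Matrix (Fin 2) (Fin 2) ℂ) :
    blockExtend (bitPair β i) M =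
      1 + kronPow n (Function.update (fun j => bitProj (β j)) i (M - 1)) := by
  have he := bitPair_injective β i
  ext x y
  rw [Matrix.add_apply]
  by_cases hx : x ∈ Set.range (bitPair β i)
  · by_cases hy : y ∈ Set.range (bitPair β i)
    · obtain ⟨k, rfl⟩ := hx
      obtain ⟨l, rfl⟩ := hy
      rw [blockExtend_apply_apply he, kronPow, of_apply, Fintype.prod_eq_single i]
      · simp [bitPair, Matrix.one_apply, (Function.update_injective β i).eq_iff]
      · intro j hj
        simp [bitPair, hj, bitProj_apply]
    · obtain ⟨j, hji, hj⟩ := exists_ne_of_notMem_range_bitPair β i hy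
      rw [blockExtend_apply_of_notMem_right hy,
        kronPow_update_bitProj_apply_eq_zero β i _ hji (Or.inr hj), add_zero]
  · obtain ⟨j, hji, hj⟩ := exists_ne_of_notMem_range_bitPair β i hx
    rw [blockExtend_apply_of_notMem_left hx,
      kronPow_update_bitProj_apply_eq_zero β i _ hji (Or.inl hj), add_zero]

theorem isControlledGate_blockExtend_bitPair {M : Matrix (Fin 2) (Fin 2) ℂ}
    (hM : M ∈ unitaryGroup (Fin 2) ℂ) :
    IsControlledGate n (n - 1) (blockExtend (bitPair β i) M) := by
  have hctrl : ∀ j, bitProj (β j) = E00 ∨ bitProj (β j) = E11 := fun j => by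
    unfold bitProj; split_ifs <;> simp
  refine ⟨_, i, M, hM, Function.update_self .., fun j hj => ?_, ?_,
    blockExtend_bitPair_eq_one_add_kronPow β i M⟩
  · rw [Function.update_of_ne hj]; exact (hctrl j).imp_right Or.inl
  · have hset : {j | j ≠ i ∧ (Function.update (fun j => bitProj (β j)) i (M - 1) j = E00 ∨
        Function.update (fun j => bitProj (β j)) i (M - 1) j = E11)} = {i}ᶜ := by
      ext j
      refine ⟨fun h => h.1, fun hj => ⟨hj, ?_⟩⟩
      rw [Function.update_of_ne hj]
      exact hctrl j
    have := Set.ncard_add_ncard_compl ({i} : Set (Fin n))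
    rw [hset]
    simp only [Set.ncard_singleton, Nat.card_eq_fintype_card, Fintype.card_fin] at this
    omega

end ControlledGate

theorem isControlledGate_blockExtend {n : ℕ} {a b : Fin (2 ^ n)} (hab : (qubitGraph n).Adj a b)
    {W : Matrix (Fin 2) (Fin 2) ℂ} (hW : W ∈ unitaryGroup (Fin 2) ℂ) :
    IsControlledGate n (n - 1) (blockExtend ![a, b] W) := by
  obtain ⟨i, hne, hoff⟩ := exists_ne_forall_eq_of_hammingDist_eq_one hab
  set β := finFunctionFinEquiv.symm a
  set σ := Equiv.swap 0 (β i)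
  have hσ : bitPair β i = ![a, b] ∘ σ := by
    have hb : Function.update β i (finFunctionFinEquiv.symm b i) =
        finFunctionFinEquiv.symm b := by
      ext j
      by_cases hj : j = i
      · subst hj; simp
      · simp [hj, hoff j hj]
    have hσb : σ (finFunctionFinEquiv.symm b i) = 1 := by
      have key : ∀ u v : Fin 2, v ≠ u → Equiv.swap 0 u v = 1 := by decide
      exact key _ _ hne.symm
    funext c
    obtain rfl | rfl : c = β i ∨ c = finFunctionFinEquiv.symm b i := by omega
    · simp [bitPair, σ, β]
    · simp [bitPair, hσb, hb]
  rw [← blockExtend_comp_equiv σ W, ← hσ]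
  exact isControlledGate_blockExtend_bitPair β i (submatrix_equiv_mem_unitaryGroup hW σ)

/-- Every `n`-qubit unitary gate is a product of at most `2^{n-1}(2^n - 1)`
controlled single-qubit gates, each with at most `n - 1` controls. -/
theorem unitary_decomposition (n : ℕ) (hn : 1 ≤ n)
    (U : Matrix (Fin (2 ^ n)) (Fin (2 ^ n)) ℂ)
    (hU : U ∈ Matrix.unitaryGroup (Fin (2 ^ n)) ℂ) :
    ∃ (r : ℕ) (L : List (Matrix (Fin (2 ^ n)) (Fin (2 ^ n)) ℂ)),
      r ≤ 2 ^ (n - 1) * (2 ^ n - 1) ∧ L.length = r ∧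
      (∀ A ∈ L, ∃ k ≤ n - 1, IsControlledGate n k A) ∧
      U = L.prod := by
  obtain ⟨k, rfl⟩ : ∃ k, n = k + 1 := ⟨n - 1, by omega⟩
  have hU' : U ∈ idOutside (grayPath (k + 1) '' Set.Iic (2 ^ (k + 1) - 1)) := by
    rw [grayPath_image_Iic, idOutside_univ]
    trivial
  obtain ⟨L, hL, hLS, rfl⟩ := isProdOfAtMost_edgeTwoLevels (p := grayPath (k + 1))
    (Nat.le_sub_one_of_lt (Nat.one_lt_two_pow k.succ_ne_zero))
    (fun i hi => qubitGraph_adj_grayPath hi) hU hU'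
  refine ⟨L.length, L, hL.trans_eq ?_, rfl, fun A hA => ⟨k, le_rfl, ?_⟩, rfl⟩
  · rw [Nat.sub_add_cancel Nat.one_le_two_pow, Nat.choose_two_right, pow_succ', mul_assoc,
      Nat.mul_div_cancel_left _ two_pos, Nat.add_sub_cancel]
  · obtain ⟨a, -, b, -, hab, W, hW, rfl⟩ := hLS A hA
    exact isControlledGate_blockExtend hab hW
end

section
/- Let n ≥ 1 and let V_1, …, V_n ∈ M_2(ℂ) be such that exactly one V_i equals W − I_2 for some unitary matrix W ∈ M_2(ℂ), and every other V_j belongs to {E_00, E_11, I_2}. Then the matrix I_{2^n} + V_n ⊗ V_{n−1} ⊗ ⋯ ⊗ V_1 ∈ M_{2^n}(ℂ) is unitary. -/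
open Matrix

lemma kronPow_mul (n : ℕ) (V V' : Fin n → Matrix (Fin 2) (Fin 2) ℂ) :
    kronPow n V * kronPow n V' = kronPow n (fun j => V j * V' j) := by
  ext x y
  simp only [kronPow, Matrix.mul_apply, of_apply]
  rw [← Equiv.sum_comp (finFunctionFinEquiv (m := 2) (n := n))]
  simp only [Equiv.symm_apply_apply]
  rw [Finset.prod_univ_sum]
  exact Finset.sum_congr rfl (fun g _ => Finset.prod_mul_distrib.symm)

lemma kronPow_conjT (n : ℕ) (V : Fin n → Matrix (Fin 2) (Fin 2) ℂ) :
    (kronPow n V)ᴴ = kronPow n (fun j => (V j)ᴴ) := by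
  ext x y
  simp [kronPow, conjTranspose_apply, map_prod]

lemma kronPow_update_add (n : ℕ) (V : Fin n → Matrix (Fin 2) (Fin 2) ℂ) (i : Fin n)
    (A B : Matrix (Fin 2) (Fin 2) ℂ) :
    kronPow n (Function.update V i (A + B)) =
      kronPow n (Function.update V i A) + kronPow n (Function.update V i B) := by
  ext x y
  simp only [kronPow, of_apply, Matrix.add_apply]
  rw [← Finset.mul_prod_erase _ _ (Finset.mem_univ i),
      ← Finset.mul_prod_erase _ _ (Finset.mem_univ i),
      ← Finset.mul_prod_erase _ _ (Finset.mem_univ i)]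
  have h : ∀ C : Matrix (Fin 2) (Fin 2) ℂ,
      ∏ j ∈ Finset.univ.erase i,
        (Function.update V i C) j (finFunctionFinEquiv.symm x j) (finFunctionFinEquiv.symm y j) =
      ∏ j ∈ Finset.univ.erase i,
        V j (finFunctionFinEquiv.symm x j) (finFunctionFinEquiv.symm y j) := by
    intro C
    apply Finset.prod_congr rfl
    intro j hj
    rw [Function.update_of_ne (Finset.ne_of_mem_erase hj)]
  rw [h, h, h, Function.update_self, Function.update_self, Function.update_self,
      Matrix.add_apply, add_mul]

lemma kronPow_zero (n : ℕ) (V : Fin n → Matrix (Fin 2) (Fin 2) ℂ) (i : Fin n)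
    (h : V i = 0) : kronPow n V = 0 := by
  ext x y
  simp only [kronPow, of_apply, Matrix.zero_apply]
  exact Finset.prod_eq_zero (Finset.mem_univ i) (by simp [h])

/-- If exactly one factor `V i` equals `W - I` for a unitary `W ∈ M_2(ℂ)` and
every other factor belongs to `{E00, E11, I}`, then
`I + V_n ⊗ ⋯ ⊗ V_1` is a unitary `2^n × 2^n` matrix. -/
theorem controlled_gate_unitary (n : ℕ) (hn : 1 ≤ n)
    (V : Fin n → Matrix (Fin 2) (Fin 2) ℂ) (i : Fin n)
    (W : Matrix (Fin 2) (Fin 2) ℂ)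
    (hW : W ∈ Matrix.unitaryGroup (Fin 2) ℂ)
    (hVi : V i = W - 1)
    (hVj : ∀ j, j ≠ i → V j = E00 ∨ V j = E11 ∨ V j = 1) :
    (1 + kronPow n V) ∈ Matrix.unitaryGroup (Fin (2 ^ n)) ℂ := by
  have hP : ∀ j, j ≠ i → (V j)ᴴ = V j ∧ V j * V j = V j := by
    intro j hj
    rcases hVj j hj with h | h | h <;> rw [h] <;> constructor <;>
      · ext a b
        fin_cases a <;> fin_cases b <;>
          simp [E00, E11, Matrix.mul_apply, Fin.sum_univ_two, Matrix.one_apply,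
            Matrix.conjTranspose_apply]
  have e1 : kronPow n V = kronPow n (Function.update V i (W - 1)) := by
    rw [← hVi, Function.update_eq_self]
  have e2 : (kronPow n V)ᴴ = kronPow n (Function.update V i (Wᴴ - 1)) := by
    rw [kronPow_conjT]
    have hfun : (fun j => (V j)ᴴ) = Function.update V i (Wᴴ - 1) := by
      funext j
      by_cases hj : j = i
      · subst hj; rw [Function.update_self, hVi]; simp
      · rw [Function.update_of_ne hj, (hP j hj).1]
    rw [hfun]
  have e3 : kronPow n V * (kronPow n V)ᴴ =
      kronPow n (Function.update V i ((W - 1) * (Wᴴ - 1))) := by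
    rw [e2, kronPow_mul]
    have hfun : (fun j => V j * Function.update V i (Wᴴ - 1) j) =
        Function.update V i ((W - 1) * (Wᴴ - 1)) := by
      funext j
      by_cases hj : j = i
      · subst hj; rw [Function.update_self, Function.update_self, hVi]
      · rw [Function.update_of_ne hj, Function.update_of_ne hj, (hP j hj).2]
    rw [hfun]
  have hWW : W * Wᴴ = 1 := by
    have := hW.2
    rwa [Matrix.star_eq_conjTranspose] at this
  have hsum : kronPow n V + (kronPow n V)ᴴ + kronPow n V * (kronPow n V)ᴴ = 0 := by
    rw [e3, e2]
    nth_rewrite 1 [e1]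
    rw [← kronPow_update_add, ← kronPow_update_add]
    apply kronPow_zero _ _ i
    rw [Function.update_self]
    have h4 : W - 1 + (Wᴴ - 1) + (W - 1) * (Wᴴ - 1) = W * Wᴴ - 1 := by noncomm_ring
    rw [h4, hWW, sub_self]
  rw [Matrix.mem_unitaryGroup_iff, Matrix.star_eq_conjTranspose]
  have hexp : (1 + kronPow n V) * (1 + kronPow n V)ᴴ =
      1 + (kronPow n V + (kronPow n V)ᴴ + kronPow n V * (kronPow n V)ᴴ) := by
    rw [conjTranspose_add, conjTranspose_one]
    noncomm_ring
  rw [hexp, hsum, add_zero]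
end

section
/- Let (a_n)_{n≥2} be a sequence of natural numbers satisfying a_2 = 4 and a_n = a_{n−1} + 2(n−1) + 2^{n−3}(n+2)(n−1) for all n ≥ 3. Then a_n = n(n−1)(2^{n−2}+1) for all n ≥ 2. -/
/-- The sequence `a` counting 1-controlled gates in the recurrence scheme,
with `a 2 = 4` and `a n = a (n-1) + 2(n-1) + 2^{n-3}(n+2)(n-1)` for `n ≥ 3`,
has closed form `a n = n(n-1)(2^{n-2}+1)` for all `n ≥ 2`. -/
theorem one_control_closed_form (a : ℕ → ℕ)
    (h2 : a 2 = 4)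
    (hrec : ∀ n : ℕ, 3 ≤ n →
      a n = a (n - 1) + 2 * (n - 1) + 2 ^ (n - 3) * (n + 2) * (n - 1)) :
    ∀ n : ℕ, 2 ≤ n → a n = n * (n - 1) * (2 ^ (n - 2) + 1) := by
  intro n hn
  induction n, hn using Nat.le_induction with
  | base => simpa using h2
  | succ k hk ih =>
    obtain ⟨m, rfl⟩ := Nat.exists_eq_add_of_le hk
    have h := hrec (2 + m + 1) (by omega)
    simp only [show 2 + m + 1 - 1 = 2 + m by omega,
      show 2 + m + 1 - 3 = m by omega,
      show 2 + m + 1 - 2 = m + 1 by omega,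
      show 2 + m - 1 = m + 1 by omega, show 2 + m - 2 = m by omega] at ih h ⊢
    simp only [ih] at h ⊢
    rw [h]; ring
end

section
/- Suppose g : ℕ × ℕ → ℤ satisfies: g(n,0) = n for all n ≥ 1; g(n,1) = n(n−1)(2^{n−2}+1) for all n ≥ 2; g(n,2) = (4^n−4)/3 − 2^n(n−1) + n(n−1)(n−2)/2 for all n ≥ 3; g(n,n−1) = n+4 for all n ≥ 4; and g(n,k) = g(n−1,k) + g(n−1,k−1) + C(n−1,k) for all n ≥ 5 and 3 ≤ k ≤ n−2, where C(n−1,k) is the binomial coefficient. Then for every n ≥ 1, the sum ∑_{k=0}^{n−1} g(n,k) equals 2^{n−1}(2^n − 1). -/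
/-!
Write `S n = ∑_{k<n} g n k`. Summing the Pascal-type recurrence over the interior indices
`3 ≤ k ≤ n - 1` of level `n + 1` expresses `S (n + 1)` as `2 * S n` plus a tail of binomial
coefficients of `n` plus the boundary values; together these corrections add up to exactly `4 ^ n`.
Since `2^{n-1}(2^n - 1)` satisfies the same recursion `T (n + 1) = 2 T n + 4 ^ n`, induction from
the directly computed cases `n ≤ 4` finishes the proof.
-/

open Finset

lemma three_dvd_four_pow_sub_four (n : ℕ) : (3 : ℤ) ∣ 4 ^ n - 4 := by
  obtain ⟨c, hc⟩ := sub_dvd_pow_sub_pow (4 : ℤ) 1 n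
  exact ⟨c - 1, by linear_combination hc⟩

lemma six_mul_ediv_three_sub_add_ediv_two (p q n : ℤ) (hp : 3 ∣ p) :
    6 * (p / 3 - q + n * (n - 1) * (n - 2) / 2) = 2 * p - 6 * q + 3 * (n * (n - 1) * (n - 2)) := by
  have hn : 2 ∣ n * (n - 1) * (n - 2) := (Int.even_mul_pred_self n).two_dvd.mul_right _
  linear_combination 2 * Int.mul_ediv_cancel' hp + 3 * Int.mul_ediv_cancel' hn

section

variable {M : Type*} [AddCommMonoid M]

lemma sum_range_add_two (f : ℕ → M) (n : ℕ) :
    ∑ k ∈ range (n + 2), f k = f 0 + f 1 + ∑ i ∈ range n, f (i + 2) := by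
  rw [sum_range_succ', sum_range_succ']
  abel

lemma sum_range_add_three (f : ℕ → M) (n : ℕ) :
    ∑ k ∈ range (n + 3), f k = f 0 + f 1 + f 2 + ∑ i ∈ range n, f (i + 3) := by
  rw [sum_range_succ', sum_range_succ', sum_range_succ']
  abel

end

lemma choose_two_mul_two (n : ℕ) : (n.choose 2 * 2 : ℤ) = n * (n - 1) := by
  rcases n with _ | n
  · simp
  · have h : (n + 1).choose 2 * 2 = (n + 1) * n := by
      simpa using (Nat.add_one_mul_choose_eq n 1).symm
    push_cast
    rw [add_sub_cancel_right]
    exact_mod_cast h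

theorem sub_of_closed_form_two (g : ℕ → ℕ → ℤ)
    (hg2 : ∀ n : ℕ, 3 ≤ n →
      g n 2 = ((4 : ℤ) ^ n - 4) / 3 - 2 ^ n * ((n : ℤ) - 1) +
        (n : ℤ) * ((n : ℤ) - 1) * ((n : ℤ) - 2) / 2)
    {n : ℕ} (hn : 3 ≤ n) :
    g (n + 1) 2 - g n 2 = 4 ^ n - (n + 1) * 2 ^ n + 3 * n.choose 2 := by
  have next := six_mul_ediv_three_sub_add_ediv_two _ (2 ^ (n + 1) * ((n + 1 : ℕ) - 1))
    (n + 1 : ℕ) (three_dvd_four_pow_sub_four (n + 1))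
  have cur := six_mul_ediv_three_sub_add_ediv_two _ (2 ^ n * ((n : ℕ) - 1))
    n (three_dvd_four_pow_sub_four n)
  rw [← hg2 _ (by omega)] at next
  rw [← hg2 _ hn] at cur
  push_cast at next
  refine mul_left_cancel₀ (by norm_num : (6 : ℤ) ≠ 0) ?_
  linear_combination next - cur - 9 * choose_two_mul_two n

theorem sum_range_succ_eq_two_mul_add_four_pow (g : ℕ → ℕ → ℤ)
    (hg0 : ∀ n : ℕ, 1 ≤ n → g n 0 = n)
    (hg1 : ∀ n : ℕ, 2 ≤ n →
      g n 1 = (n : ℤ) * ((n : ℤ) - 1) * (2 ^ (n - 2) + 1))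
    (hg2 : ∀ n : ℕ, 3 ≤ n →
      g n 2 = ((4 : ℤ) ^ n - 4) / 3 - 2 ^ n * ((n : ℤ) - 1) +
        (n : ℤ) * ((n : ℤ) - 1) * ((n : ℤ) - 2) / 2)
    (hgtop : ∀ n : ℕ, 4 ≤ n → g n (n - 1) = (n : ℤ) + 4)
    (hgrec : ∀ n k : ℕ, 5 ≤ n → 3 ≤ k → k ≤ n - 2 →
      g n k = g (n - 1) k + g (n - 1) (k - 1) + ((n - 1).choose k : ℤ))
    {n : ℕ} (hn : 4 ≤ n) :
    ∑ k ∈ range (n + 1), g (n + 1) k = 2 * ∑ k ∈ range n, g n k + 4 ^ n := by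
  obtain ⟨m, rfl⟩ := Nat.exists_eq_add_of_le' hn
  have interior : ∑ i ∈ range (m + 1), g (m + 5) (i + 3) =
      ∑ i ∈ range (m + 1), g (m + 4) (i + 3) + ∑ i ∈ range (m + 1), g (m + 4) (i + 2) +
        ∑ i ∈ range (m + 1), ((m + 4).choose (i + 3) : ℤ) := by
    simp only [← sum_add_distrib]
    refine sum_congr rfl fun i hi => ?_
    exact hgrec (m + 5) (i + 3) (by omega) (by omega) (by have := mem_range.mp hi; omega)
  have split_next : ∑ k ∈ range (m + 5), g (m + 5) k = g (m + 5) 0 + g (m + 5) 1 + g (m + 5) 2 +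
      ∑ i ∈ range (m + 1), g (m + 5) (i + 3) + g (m + 5) (m + 4) := by
    rw [sum_range_succ, sum_range_add_three]
  have split_bottom : ∑ k ∈ range (m + 4), g (m + 4) k = g (m + 4) 0 + g (m + 4) 1 + g (m + 4) 2 +
      ∑ i ∈ range (m + 1), g (m + 4) (i + 3) :=
    sum_range_add_three _ _
  have split_top : ∑ k ∈ range (m + 4), g (m + 4) k = g (m + 4) 0 + g (m + 4) 1 +
      ∑ i ∈ range (m + 1), g (m + 4) (i + 2) + g (m + 4) (m + 3) := by
    rw [sum_range_succ, sum_range_add_two]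
  have binomial : 2 ^ (m + 4) = 1 + (m + 4 : ℤ) + (m + 4).choose 2 +
      ∑ i ∈ range (m + 1), ((m + 4).choose (i + 3) : ℤ) + 1 := by
    have := Nat.sum_range_choose (m + 4)
    rw [sum_range_succ, sum_range_add_three] at this
    simp only [Nat.choose_zero_right, Nat.choose_one_right, Nat.choose_self] at this
    exact_mod_cast this.symm
  have two_diff := sub_of_closed_form_two g hg2 (by omega : 3 ≤ m + 4)
  have choose_two := choose_two_mul_two (m + 4)
  push_cast at two_diff choose_two
  have zero_next := hg0 (m + 5) (by omega)
  have zero_cur := hg0 (m + 4) (by omega)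
  have one_next := hg1 (m + 5) (by omega)
  have one_cur := hg1 (m + 4) (by omega)
  have top_next := hgtop (m + 5) (by omega)
  have top_cur := hgtop (m + 4) (by omega)
  simp only [Nat.reduceSubDiff, Nat.cast_add, Nat.cast_ofNat]
    at zero_next zero_cur one_next one_cur top_next top_cur
  show ∑ k ∈ range (m + 5), g (m + 5) k = _
  linear_combination split_next + interior - split_bottom - split_top - binomial + two_diff +
    zero_next - 2 * zero_cur + one_next - 2 * one_cur + top_next - top_cur + choose_two

/-- The gate counts `g n k` of the recurrence decomposition scheme sum, over
`k = 0, …, n-1`, to the total number `2^{n-1}(2^n - 1) = N(N-1)/2` of gates. -/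
theorem total_gate_count (g : ℕ → ℕ → ℤ)
    (hg0 : ∀ n : ℕ, 1 ≤ n → g n 0 = n)
    (hg1 : ∀ n : ℕ, 2 ≤ n →
      g n 1 = (n : ℤ) * ((n : ℤ) - 1) * (2 ^ (n - 2) + 1))
    (hg2 : ∀ n : ℕ, 3 ≤ n →
      g n 2 = ((4 : ℤ) ^ n - 4) / 3 - 2 ^ n * ((n : ℤ) - 1) +
        (n : ℤ) * ((n : ℤ) - 1) * ((n : ℤ) - 2) / 2)
    (hgtop : ∀ n : ℕ, 4 ≤ n → g n (n - 1) = (n : ℤ) + 4)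
    (hgrec : ∀ n k : ℕ, 5 ≤ n → 3 ≤ k → k ≤ n - 2 →
      g n k = g (n - 1) k + g (n - 1) (k - 1) + ((n - 1).choose k : ℤ)) :
    ∀ n : ℕ, 1 ≤ n →
      ∑ k ∈ Finset.range n, g n k = 2 ^ (n - 1) * (2 ^ n - 1) := by
  intro n hn
  induction n, hn using Nat.le_induction with
  | base => simp [hg0]
  | succ n hn ih =>
    rcases lt_or_ge n 4 with hsmall | hlarge
    · have g43 : g 4 3 = 8 := by simpa using hgtop 4 le_rfl
      interval_cases n <;> simp [sum_range_succ, hg0, hg1, hg2, g43]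
    · obtain ⟨m, rfl⟩ := Nat.exists_eq_add_of_le' hn
      rw [sum_range_succ_eq_two_mul_add_four_pow g hg0 hg1 hg2 hgtop hgrec hlarge, ih,
        show (4 : ℤ) ^ (m + 1) = 2 ^ (m + 1) * 2 ^ (m + 1) by rw [← mul_pow]; norm_num]
      simp only [Nat.add_sub_cancel]
      ring
end

section
/- For every integer n ≥ 2, the map φ defined on nonempty subsets S of {1, 2, …, n−1} by φ(S) = 2^{min(S) − 1} + ∑_{s ∈ S} (2^{s−1} − 1) is a bijection from the collection of nonempty subsets of {1, …, n−1} onto the set {1, 2, …, 2^{n−1} − 1}. -/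
/-- The map `φ(S) = 2^{min(S)-1} + ∑_{s ∈ S} (2^{s-1} - 1)` on nonempty finite
sets of positive integers (describing the annihilation order of the first
column in the recurrence decomposition scheme). -/
noncomputable def phi (S : Finset ℕ) : ℕ :=
  2 ^ (sInf (S : Set ℕ) - 1) + ∑ s ∈ S, (2 ^ (s - 1) - 1)

lemma two_pow_pred (k : ℕ) (hk : 1 ≤ k) :
    2 ^ (k - 1) + 2 ^ (k - 1) = 2 ^ k := by
  have h : k - 1 + 1 = k := by omega
  calc 2 ^ (k - 1) + 2 ^ (k - 1) = 2 ^ (k - 1 + 1) := by ring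
    _ = 2 ^ k := by rw [h]

lemma sInf_coe_finset (S : Finset ℕ) (hS : S.Nonempty) :
    sInf (S : Set ℕ) = S.min' hS := by
  apply le_antisymm
  · exact Nat.sInf_le (by simpa using S.min'_mem hS)
  · have hmem : sInf (S : Set ℕ) ∈ (S : Set ℕ) :=
      Nat.sInf_mem (by simpa using hS)
    exact S.min'_le _ (by simpa using hmem)

lemma phi_singleton (k : ℕ) (hk : 1 ≤ k) : phi {k} = 2 ^ k - 1 := by
  have h1 : (1:ℕ) ≤ 2 ^ (k - 1) := Nat.one_le_two_pow
  have h2 := two_pow_pred k hk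
  simp only [phi, Finset.coe_singleton, csInf_singleton, Finset.sum_singleton]
  omega

lemma phi_insert (S : Finset ℕ) (hS : S.Nonempty) (k : ℕ)
    (hk : ∀ s ∈ S, s < k) :
    phi (insert k S) = phi S + (2 ^ (k - 1) - 1) := by
  have hkS : k ∉ S := fun h => lt_irrefl k (hk k h)
  have hne : (insert k S).Nonempty := ⟨k, Finset.mem_insert_self _ _⟩
  have hmin : sInf ((insert k S : Finset ℕ) : Set ℕ) = sInf (S : Set ℕ) := by
    rw [sInf_coe_finset _ hne, sInf_coe_finset _ hS]
    apply le_antisymm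
    · exact Finset.min'_le _ _ (Finset.mem_insert_of_mem (S.min'_mem hS))
    · have h := (insert k S).min'_mem hne
      rcases Finset.mem_insert.1 h with h | h
      · rw [h]; exact le_of_lt (hk _ (S.min'_mem hS))
      · exact S.min'_le _ h
  unfold phi
  rw [hmin, Finset.sum_insert hkS]
  omega

lemma eq_singleton_of_erase_empty {S : Finset ℕ} {k : ℕ} (hS : S.Nonempty)
    (h : ¬(S.erase k).Nonempty) : S = {k} := by
  rcases (Finset.erase_eq_empty_iff S k).1
      (Finset.not_nonempty_iff_eq_empty.1 h) with h' | h'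
  · exact absurd h' (Finset.nonempty_iff_ne_empty.1 hS)
  · exact h'

lemma phi_bounds : ∀ n : ℕ, ∀ S : Finset ℕ, S.card ≤ n → ∀ (hS : S.Nonempty),
    (∀ s ∈ S, 1 ≤ s) →
    2 ^ (S.max' hS - 1) ≤ phi S ∧ phi S ≤ 2 ^ (S.max' hS) - 1 := by
  intro n
  induction n with
  | zero => intro S hcard hS _; exact absurd (Finset.card_pos.2 hS) (by omega)
  | succ n ih =>
    intro S hcard hS h1
    set k := S.max' hS with hkdef
    have hk1 : 1 ≤ k := h1 _ (S.max'_mem hS)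
    have hkmem : k ∈ S := S.max'_mem hS
    have hp3 := two_pow_pred k hk1
    have hp4 : (1:ℕ) ≤ 2 ^ (k - 1) := Nat.one_le_two_pow
    by_cases hS' : (S.erase k).Nonempty
    · have hsub : ∀ s ∈ S.erase k, s < k := by
        intro s hs
        have := S.le_max' s (Finset.mem_of_mem_erase hs)
        have := Finset.ne_of_mem_erase hs
        omega
      have hins : S = insert k (S.erase k) := (Finset.insert_erase hkmem).symm
      have hphi : phi S = phi (S.erase k) + (2 ^ (k - 1) - 1) := by
        conv_lhs => rw [hins]
        exact phi_insert _ hS' k hsub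
      have hcard' : (S.erase k).card ≤ n := by
        have := Finset.card_erase_of_mem hkmem
        omega
      have h1' : ∀ s ∈ S.erase k, 1 ≤ s := fun s hs =>
        h1 s (Finset.mem_of_mem_erase hs)
      obtain ⟨hlb, hub⟩ := ih (S.erase k) hcard' hS' h1'
      set k' := (S.erase k).max' hS' with hk'def
      have hk'lt : k' < k := hsub _ ((S.erase k).max'_mem hS')
      have hk'1 : 1 ≤ k' := h1' _ ((S.erase k).max'_mem hS')
      have hp1 : (1:ℕ) ≤ 2 ^ (k' - 1) := Nat.one_le_two_pow
      have hp2 : (2:ℕ) ^ k' ≤ 2 ^ (k - 1) :=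
        Nat.pow_le_pow_right (by norm_num) (by omega)
      constructor <;> omega
    · have hSsing : S = {k} := eq_singleton_of_erase_empty hS hS'
      rw [hSsing, phi_singleton k hk1]
      constructor <;> omega

lemma phi_inj : ∀ n : ℕ, ∀ S : Finset ℕ, S.card ≤ n → ∀ T : Finset ℕ,
    S.Nonempty → T.Nonempty → (∀ s ∈ S, 1 ≤ s) → (∀ s ∈ T, 1 ≤ s) →
    phi S = phi T → S = T := by
  intro n
  induction n with
  | zero => intro S hcard _ hS; exact absurd (Finset.card_pos.2 hS) (by omega)
  | succ n ih =>
    intro S hcard T hS hT h1S h1T heq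
    obtain ⟨hSlb, hSub⟩ := phi_bounds S.card S le_rfl hS h1S
    obtain ⟨hTlb, hTub⟩ := phi_bounds T.card T le_rfl hT h1T
    set a := S.max' hS with hadef
    set b := T.max' hT with hbdef
    have ha1 : 1 ≤ a := h1S _ (S.max'_mem hS)
    have hb1 : 1 ≤ b := h1T _ (T.max'_mem hT)
    have hpa : (1:ℕ) ≤ 2 ^ a := Nat.one_le_two_pow
    have hpb : (1:ℕ) ≤ 2 ^ b := Nat.one_le_two_pow
    have hab : a = b := by
      by_contra hne
      rcases lt_or_gt_of_ne hne with h | h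
      · have : (2:ℕ) ^ a ≤ 2 ^ (b - 1) :=
          Nat.pow_le_pow_right (by norm_num) (by omega)
        omega
      · have : (2:ℕ) ^ b ≤ 2 ^ (a - 1) :=
          Nat.pow_le_pow_right (by norm_num) (by omega)
        omega
    have hkS : a ∈ S := S.max'_mem hS
    have hkT : a ∈ T := by rw [hab]; exact T.max'_mem hT
    have hsubS : ∀ s ∈ S.erase a, s < a := by
      intro s hs
      have := S.le_max' s (Finset.mem_of_mem_erase hs)
      have := Finset.ne_of_mem_erase hs
      omega
    have hsubT : ∀ s ∈ T.erase a, s < a := by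
      intro s hs
      have h2 : s ≤ b := T.le_max' s (Finset.mem_of_mem_erase hs)
      have := Finset.ne_of_mem_erase hs
      omega
    have hp3 := two_pow_pred a ha1
    have hp4 : (1:ℕ) ≤ 2 ^ (a - 1) := Nat.one_le_two_pow
    have key : ∀ U : Finset ℕ, (hU : U.Nonempty) → (∀ s ∈ U, 1 ≤ s) →
        (∀ s ∈ U, s < a) → phi U ≤ 2 ^ (a - 1) - 1 := by
      intro U hU h1U hltU
      obtain ⟨_, hub⟩ := phi_bounds U.card U le_rfl hU h1U
      have : (2:ℕ) ^ (U.max' hU) ≤ 2 ^ (a - 1) :=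
        Nat.pow_le_pow_right (by norm_num) (by
          have := hltU _ (U.max'_mem hU); omega)
      omega
    by_cases hS' : (S.erase a).Nonempty <;> by_cases hT' : (T.erase a).Nonempty
    · have heqS : phi S = phi (S.erase a) + (2 ^ (a - 1) - 1) := by
        conv_lhs => rw [← Finset.insert_erase hkS]
        exact phi_insert _ hS' a hsubS
      have heqT : phi T = phi (T.erase a) + (2 ^ (a - 1) - 1) := by
        conv_lhs => rw [← Finset.insert_erase hkT]
        exact phi_insert _ hT' a hsubT
      have heq' : phi (S.erase a) = phi (T.erase a) := by omega
      have hcard' : (S.erase a).card ≤ n := by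
        have := Finset.card_erase_of_mem hkS
        have := Finset.card_pos.2 hS
        omega
      have hST := ih (S.erase a) hcard' (T.erase a) hS' hT'
        (fun s hs => h1S s (Finset.mem_of_mem_erase hs))
        (fun s hs => h1T s (Finset.mem_of_mem_erase hs)) heq'
      calc S = insert a (S.erase a) := (Finset.insert_erase hkS).symm
        _ = insert a (T.erase a) := by rw [hST]
        _ = T := Finset.insert_erase hkT
    · exfalso
      have hTsing : T = {a} := eq_singleton_of_erase_empty hT hT'
      have heqS : phi S = phi (S.erase a) + (2 ^ (a - 1) - 1) := by
        conv_lhs => rw [← Finset.insert_erase hkS]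
        exact phi_insert _ hS' a hsubS
      have hub' := key (S.erase a) hS'
        (fun s hs => h1S s (Finset.mem_of_mem_erase hs)) hsubS
      rw [hTsing, phi_singleton a ha1] at heq
      omega
    · exfalso
      have hSsing : S = {a} := eq_singleton_of_erase_empty hS hS'
      have heqT : phi T = phi (T.erase a) + (2 ^ (a - 1) - 1) := by
        conv_lhs => rw [← Finset.insert_erase hkT]
        exact phi_insert _ hT' a hsubT
      have hub' := key (T.erase a) hT'
        (fun s hs => h1T s (Finset.mem_of_mem_erase hs)) hsubT
      rw [hSsing, phi_singleton a ha1] at heq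
      omega
    · rw [eq_singleton_of_erase_empty hS hS', eq_singleton_of_erase_empty hT hT']

lemma phi_surj : ∀ N : ℕ, ∀ i : ℕ, 1 ≤ i → i ≤ 2 ^ N - 1 →
    ∃ S : Finset ℕ, S.Nonempty ∧ (∀ s ∈ S, 1 ≤ s ∧ s ≤ N) ∧ phi S = i := by
  intro N
  induction N with
  | zero => intro i h1 h2; omega
  | succ N ih =>
    intro i h1 h2
    have hp3 := two_pow_pred (N + 1) (by omega)
    have hp4 : (1:ℕ) ≤ 2 ^ N := Nat.one_le_two_pow
    have hNs : N + 1 - 1 = N := by omega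
    rw [hNs] at hp3
    by_cases hsmall : i ≤ 2 ^ N - 1
    · obtain ⟨S, hS, hmem, hphi⟩ := ih i h1 hsmall
      exact ⟨S, hS, fun s hs => ⟨(hmem s hs).1, le_trans (hmem s hs).2 (by omega)⟩,
        hphi⟩
    · by_cases htop : i = 2 ^ (N + 1) - 1
      · refine ⟨{N + 1}, ⟨N + 1, by simp⟩, by simp, ?_⟩
        rw [phi_singleton (N + 1) (by omega), htop]
      · have hj1 : 1 ≤ i - (2 ^ N - 1) := by omega
        have hj2 : i - (2 ^ N - 1) ≤ 2 ^ N - 1 := by omega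
        obtain ⟨S, hS, hmem, hphi⟩ := ih (i - (2 ^ N - 1)) hj1 hj2
        refine ⟨insert (N + 1) S, ⟨N + 1, Finset.mem_insert_self _ _⟩, ?_, ?_⟩
        · intro s hs
          rcases Finset.mem_insert.1 hs with h | h
          · omega
          · have := hmem s h; omega
        · rw [phi_insert S hS (N + 1) (fun s hs => by have := hmem s hs; omega),
            hphi, hNs]
          omega

/-- For `n ≥ 2`, the map `φ` is a bijection from the collection of nonempty
subsets of `{1, …, n-1}` onto `{1, 2, …, 2^{n-1} - 1}`. -/
theorem phi_bijOn (n : ℕ) (hn : 2 ≤ n) :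
    Set.BijOn phi
      {S : Finset ℕ | S.Nonempty ∧ (S : Set ℕ) ⊆ Set.Icc 1 (n - 1)}
      (Set.Icc 1 (2 ^ (n - 1) - 1)) := by
  set N := n - 1 with hN
  have hN1 : 1 ≤ N := by omega
  refine ⟨?_, ?_, ?_⟩
  · rintro S ⟨hS, hsub⟩
    have h1 : ∀ s ∈ S, 1 ≤ s := fun s hs => (hsub (by simpa using hs)).1
    obtain ⟨hlb, hub⟩ := phi_bounds S.card S le_rfl hS h1
    have hmaxN : S.max' hS ≤ N := (hsub (by simpa using S.max'_mem hS)).2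
    have hp1 : (1:ℕ) ≤ 2 ^ (S.max' hS - 1) := Nat.one_le_two_pow
    have hp2 : (2:ℕ) ^ (S.max' hS) ≤ 2 ^ N :=
      Nat.pow_le_pow_right (by norm_num) hmaxN
    exact ⟨by omega, by omega⟩
  · rintro S ⟨hS, hsubS⟩ T ⟨hT, hsubT⟩ heq
    exact phi_inj S.card S le_rfl T hS hT
      (fun s hs => (hsubS (by simpa using hs)).1)
      (fun s hs => (hsubT (by simpa using hs)).1) heq
  · rintro i ⟨h1, h2⟩
    obtain ⟨S, hS, hmem, hphi⟩ := phi_surj N i h1 h2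
    exact ⟨S, ⟨hS, fun s hs => by
      have := hmem s (by simpa using hs); exact ⟨this.1, this.2⟩⟩, hphi⟩
end

section
/- Let n ≥ 2 and let p(S) be defined for nonempty subsets S of {1, …, n−1} by p(S) = n if |S| = 1 and p(S) = the second-smallest element of S if |S| ≥ 2. Then for m = n−1, the number of nonempty subsets S of {1, …, n−1} with p(S) ≥ m+1 equals n−1; and for each m with 1 ≤ m ≤ n−2, the number of nonempty subsets S of {1, …, n−1} with p(S) ≥ m+1 equals (n−1) + ∑_{k=m+1}^{n−1} 2^{n−k−1}(k−1). -/
/-- The second-smallest element of a finite set of naturals (meaningful when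
the set has at least two elements). -/
noncomputable def secondMin (S : Finset ℕ) : ℕ :=
  sInf ((S : Set ℕ) \ {sInf (S : Set ℕ)})

/-- The position `p(S)` of the `1`-control of the gate corresponding to a
nonempty subset `S` of `{1, …, n-1}`: equal to `n` if `S` is a singleton,
and to the second-smallest element of `S` otherwise. -/
noncomputable def controlPos (n : ℕ) (S : Finset ℕ) : ℕ :=
  if S.card = 1 then n else secondMin S

open Finset

/-! For `m < n` and nonempty `S`, `m < p(S)` holds exactly when at most one element of `S` is
`≤ m`: a singleton has `p(S) = n`, and otherwise `p(S)` is the second-smallest element. Splitting a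
subset of `{1, …, n-1}` into its parts in `{1, …, m}` and `{m+1, …, n-1}`, the sets with this
property, the empty one included, number `(m + 1) 2^(n-1-m)`. The closed form
`(m + 1) 2^(n-1-m) - 1` matches the stated sum by downward induction on `m`, the step from `m + 1`
to `m` contributing the term `k = m + 1`. -/

theorem card_filter_powerset_card_le_one {α : Type*} [DecidableEq α] (t : Finset α) :
    #{A ∈ t.powerset | #A ≤ 1} = #t + 1 := by
  have : {A ∈ t.powerset | #A ≤ 1} = insert ∅ (t.map ⟨_, singleton_injective⟩) := by
    ext A
    simp only [mem_filter, mem_powerset, mem_insert, mem_map, Function.Embedding.coeFn_mk,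
      Nat.le_one_iff_eq_zero_or_eq_one, card_eq_zero, card_eq_one]
    constructor
    · rintro ⟨hA, rfl | ⟨a, rfl⟩⟩
      · exact .inl rfl
      · exact .inr ⟨a, singleton_subset_iff.mp hA, rfl⟩
    · rintro (rfl | ⟨a, ha, rfl⟩)
      · simp
      · exact ⟨singleton_subset_iff.mpr ha, .inr ⟨a, rfl⟩⟩
  rw [this, card_insert_of_notMem (by simp), card_map]

theorem card_filter_powerset_card_filter_le_one {α : Type*} [DecidableEq α] (s : Finset α)
    (p : α → Prop) [DecidablePred p] :
    #{T ∈ s.powerset | #{x ∈ T | p x} ≤ 1} = (#{x ∈ s | p x} + 1) * 2 ^ #{x ∈ s | ¬p x} := by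
  rw [← card_filter_powerset_card_le_one, ← card_powerset, ← card_product]
  refine card_nbij' (fun T => ({x ∈ T | p x}, {x ∈ T | ¬p x})) (fun AB => AB.1 ∪ AB.2)
    ?_ ?_ ?_ ?_
  · intro T hT
    simp only [mem_coe, mem_filter, mem_product, mem_powerset] at hT ⊢
    exact ⟨⟨filter_subset_filter _ hT.1, hT.2⟩, filter_subset_filter _ hT.1⟩
  · rintro ⟨A, B⟩ hAB
    simp only [mem_coe, mem_filter, mem_product, mem_powerset, subset_iff] at hAB ⊢
    have : {x ∈ A ∪ B | p x} = A := by ext x; grind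
    grind
  · intro T _
    exact filter_union_filter_not_eq _ T
  · rintro ⟨A, B⟩ hAB
    simp only [mem_coe, mem_filter, mem_product, mem_powerset, subset_iff] at hAB
    ext x <;> grind

theorem secondMin_eq_min'_erase {S : Finset ℕ} (hS : S.Nonempty)
    (hS' : (S.erase (S.min' hS)).Nonempty) : secondMin S = (S.erase (S.min' hS)).min' hS' := by
  rw [secondMin, hS.csInf_eq_min', ← coe_erase, hS'.csInf_eq_min']

theorem lt_secondMin_iff {S : Finset ℕ} (hS : 2 ≤ #S) (m : ℕ) :
    m < secondMin S ↔ #{x ∈ S | x ≤ m} ≤ 1 := by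
  have hne : S.Nonempty := card_pos.mp (by omega)
  have hne' : (S.erase (S.min' hne)).Nonempty := by
    rw [← card_pos, card_erase_of_mem (S.min'_mem hne)]; omega
  rw [secondMin_eq_min'_erase hne hne', lt_min'_iff]
  constructor
  · intro h
    refine card_le_one.mpr fun a ha b hb => ?_
    rw [mem_filter] at ha hb
    by_contra hab
    rcases eq_or_ne a (S.min' hne) with rfl | ha'
    · exact absurd (h b (mem_erase.mpr ⟨Ne.symm hab, hb.1⟩)) (by omega)
    · exact absurd (h a (mem_erase.mpr ⟨ha', ha.1⟩)) (by omega)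
  · intro h y hy
    rw [mem_erase] at hy
    by_contra! hym
    have hmin : S.min' hne ≤ m := (S.min'_le y hy.2).trans hym
    have : 1 < #{x ∈ S | x ≤ m} := one_lt_card.mpr ⟨_, mem_filter.mpr ⟨S.min'_mem hne, hmin⟩, y,
      mem_filter.mpr ⟨hy.2, hym⟩, Ne.symm hy.1⟩
    omega

theorem lt_controlPos_iff {n m : ℕ} (hm : m < n) {S : Finset ℕ} (hS : S.Nonempty) :
    m < controlPos n S ↔ #{x ∈ S | x ≤ m} ≤ 1 := by
  unfold controlPos
  split_ifs with h
  · exact iff_of_true hm ((card_filter_le _ _).trans h.le)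
  · exact lt_secondMin_iff (by have := hS.card_pos; omega) m

theorem card_filter_lt_controlPos {n m : ℕ} (hm : m ≤ n - 1) :
    #{S ∈ (Icc 1 (n - 1)).powerset | S.Nonempty ∧ m < controlPos n S} =
      (m + 1) * 2 ^ (n - 1 - m) - 1 := by
  have hfilter : {S ∈ (Icc 1 (n - 1)).powerset | S.Nonempty ∧ m < controlPos n S} =
      {S ∈ (Icc 1 (n - 1)).powerset | #{x ∈ S | x ≤ m} ≤ 1}.erase ∅ := by
    have hmn : ∀ S ⊆ Icc 1 (n - 1), S.Nonempty → m < n := fun S hS ⟨x, hx⟩ => by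
      have := mem_Icc.mp (hS hx); omega
    ext S
    simp only [mem_erase, mem_filter, mem_powerset, ← nonempty_iff_ne_empty]
    exact ⟨fun ⟨hS, hne, h⟩ => ⟨hne, hS, (lt_controlPos_iff (hmn S hS hne) hne).mp h⟩,
      fun ⟨hne, hS, h⟩ => ⟨hS, hne, (lt_controlPos_iff (hmn S hS hne) hne).mpr h⟩⟩
  have hle : {x ∈ Icc 1 (n - 1) | x ≤ m} = Icc 1 m := by
    ext x; simp only [mem_filter, mem_Icc]; omega
  have hgt : {x ∈ Icc 1 (n - 1) | ¬x ≤ m} = Icc (m + 1) (n - 1) := by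
    ext x; simp only [mem_filter, mem_Icc]; omega
  rw [hfilter, card_erase_of_mem (by simp), card_filter_powerset_card_filter_le_one, hle, hgt,
    Nat.card_Icc, Nat.card_Icc]
  congr 3
  omega

theorem succ_mul_two_pow_eq_add_sum {m n : ℕ} (h : m < n) :
    (m + 1) * 2 ^ (n - 1 - m) = n + ∑ k ∈ Icc (m + 1) (n - 1), 2 ^ (n - k - 1) * (k - 1) := by
  induction Nat.le_sub_one_of_lt h using Nat.decreasingInduction with
  | self => rw [Nat.sub_self, Icc_eq_empty (by omega), sum_empty]; omega
  | of_succ k hk ih =>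
    rw [← insert_Icc_add_one_left_eq_Icc hk, sum_insert (by simp), ← Nat.add_left_comm,
      ← ih (by omega)]
    obtain ⟨d, hd⟩ : ∃ d, n - 1 - k = d + 1 := ⟨n - 2 - k, by omega⟩
    rw [hd, show n - (k + 1) - 1 = d by omega, show n - 1 - (k + 1) = d by omega,
      Nat.add_sub_cancel]
    ring

theorem controlPos_ge_counts_general (n : ℕ) :
    (((Finset.Icc 1 (n - 1)).powerset.filter
        fun S => S.Nonempty ∧ (n - 1) + 1 ≤ controlPos n S).card = n - 1) ∧
    ∀ m : ℕ, 1 ≤ m → m ≤ n - 2 →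
      ((Finset.Icc 1 (n - 1)).powerset.filter
        fun S => S.Nonempty ∧ m + 1 ≤ controlPos n S).card =
      (n - 1) + ∑ k ∈ Finset.Icc (m + 1) (n - 1), 2 ^ (n - k - 1) * (k - 1) := by
  refine ⟨(card_filter_lt_controlPos le_rfl).trans (by simp), fun m hm hmn => ?_⟩
  refine (card_filter_lt_controlPos (by omega)).trans ?_
  rw [succ_mul_two_pow_eq_add_sum (by omega)]
  omega

/-- For `n ≥ 2`: with `m = n-1`, the number of nonempty subsets
`S ⊆ {1, …, n-1}` with `p(S) ≥ m+1` is `n - 1`; and for each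
`1 ≤ m ≤ n-2`, the number of nonempty subsets `S ⊆ {1, …, n-1}` with
`p(S) ≥ m+1` is `(n-1) + ∑_{k=m+1}^{n-1} 2^{n-k-1}(k-1)`. -/
theorem controlPos_ge_counts (n : ℕ) (hn : 2 ≤ n) :
    (((Finset.Icc 1 (n - 1)).powerset.filter
        fun S => S.Nonempty ∧ (n - 1) + 1 ≤ controlPos n S).card = n - 1) ∧
    ∀ m : ℕ, 1 ≤ m → m ≤ n - 2 →
      ((Finset.Icc 1 (n - 1)).powerset.filter
        fun S => S.Nonempty ∧ m + 1 ≤ controlPos n S).card =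
      (n - 1) + ∑ k ∈ Finset.Icc (m + 1) (n - 1), 2 ^ (n - k - 1) * (k - 1) :=
  controlPos_ge_counts_general n
end
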